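/- arXiv:2103.14437 — 2 statements merged into one kernel-verified Lean document; each statement's English description precedes it below -/
import Mathlib

section
/- Let a and γ be real numbers with a ≠ 0, let k ∈ ℂ, and let ω ∈ ℂ with ω ≠ 0, γ − i·a·ω ≠ 0 and γ − 3i·a·ω ≠ 0. Define n²(z) = 1 + 1/(γ − i·a·z). If a·ω³ + i(γ+1)·ω² − a·k²·ω − i·γ·k² = 0, then n²(ω) ≠ n²(3ω), the denominator −9·ω²·(γ − 3i·a·ω) + 9·k²·(γ − 3i·a·ω) − 9·ω² is nonzero, and 9·ω²·(γ − 3i·a·ω) / (−9·ω²·(γ − 3i·a·ω) + 9·k²·(γ − 3i·a·ω) − 9·ω²) = 1/(n²(ω) − n²(3ω)). -/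
/-!
Multiplying the dispersion relation by `i` factors it as `(k² - ω²)(γ - i a ω) = ω²`, that is
`k² = ω² n²(ω)`. Dividing the denominator of `c₁` by `γ - 3 i a ω` turns it into
`9 (k² - ω² n²(3ω)) = 9 ω² (n²(ω) - n²(3ω))`, which is nonzero because `z ↦ n²(z)` is injective.
-/

/-- In the toy model `g = γ` and `b = i a`. -/
def toyIndexSq {K : Type*} [Field K] (g b z : K) : K := 1 + 1 / (g - b * z)

section Field

variable {K : Type*} [Field K] {g b : K}

theorem toyIndexSq_injective (hb : b ≠ 0) : Function.Injective (toyIndexSq g b) := by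
  intro x y h
  simp only [toyIndexSq, add_right_inj, one_div, inv_inj, sub_right_inj] at h
  exact mul_left_cancel₀ hb h

theorem harmonic_denom_eq {k ω y : K} (hy : g - b * y ≠ 0)
    (hk : k ^ 2 = ω ^ 2 * toyIndexSq g b ω) :
    -9 * ω ^ 2 * (g - b * y) + 9 * k ^ 2 * (g - b * y) - 9 * ω ^ 2
      = 9 * ω ^ 2 * (g - b * y) * (toyIndexSq g b ω - toyIndexSq g b y) := by
  rw [hk]
  unfold toyIndexSq
  field_simp
  ring

end Field

theorem sq_eq_sq_mul_toyIndexSq_of_dispersion {a γ : ℝ} {k ω : ℂ}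
    (h1 : (γ : ℂ) - Complex.I * a * ω ≠ 0)
    (hdisp : (a : ℂ) * ω ^ 3 + Complex.I * ((γ : ℂ) + 1) * ω ^ 2
        - (a : ℂ) * k ^ 2 * ω - Complex.I * (γ : ℂ) * k ^ 2 = 0) :
    k ^ 2 = ω ^ 2 * toyIndexSq (γ : ℂ) (Complex.I * a) ω := by
  rw [toyIndexSq, mul_add, mul_one, mul_one_div, ← sub_eq_iff_eq_add', eq_div_iff h1]
  linear_combination Complex.I * hdisp - ((γ + 1) * ω ^ 2 - γ * k ^ 2) * Complex.I_sq

/-- The third-harmonic coefficient `c₁` of the Sellmeier-transformed toy model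
equals `1/(n²(ω) − n²(3ω))`, where `n²(z) = 1 + 1/(γ − i·a·z)`. -/
theorem toy_c1_coefficient (a γ : ℝ) (ha : a ≠ 0) (k ω : ℂ) (hω : ω ≠ 0)
    (h1 : (γ : ℂ) - Complex.I * (a : ℂ) * ω ≠ 0)
    (h3 : (γ : ℂ) - 3 * Complex.I * (a : ℂ) * ω ≠ 0)
    (n2 : ℂ → ℂ) (hn2 : ∀ z : ℂ, n2 z = 1 + 1 / ((γ : ℂ) - Complex.I * (a : ℂ) * z))
    (hdisp : (a : ℂ) * ω ^ 3 + Complex.I * ((γ : ℂ) + 1) * ω ^ 2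
        - (a : ℂ) * k ^ 2 * ω - Complex.I * (γ : ℂ) * k ^ 2 = 0) :
    n2 ω ≠ n2 (3 * ω) ∧
    (-9 * ω ^ 2 * ((γ : ℂ) - 3 * Complex.I * (a : ℂ) * ω)
        + 9 * k ^ 2 * ((γ : ℂ) - 3 * Complex.I * (a : ℂ) * ω) - 9 * ω ^ 2) ≠ 0 ∧
    9 * ω ^ 2 * ((γ : ℂ) - 3 * Complex.I * (a : ℂ) * ω)
        / (-9 * ω ^ 2 * ((γ : ℂ) - 3 * Complex.I * (a : ℂ) * ω)
            + 9 * k ^ 2 * ((γ : ℂ) - 3 * Complex.I * (a : ℂ) * ω) - 9 * ω ^ 2)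
      = 1 / (n2 ω - n2 (3 * ω)) := by
  have hb : Complex.I * (a : ℂ) ≠ 0 := mul_ne_zero Complex.I_ne_zero (by exact_mod_cast ha)
  have hD3 : (γ : ℂ) - 3 * Complex.I * a * ω = γ - Complex.I * a * (3 * ω) := by ring
  obtain rfl : n2 = toyIndexSq (γ : ℂ) (Complex.I * a) := funext hn2
  rw [hD3] at h3 ⊢
  have hne : toyIndexSq (γ : ℂ) (Complex.I * a) ω ≠ toyIndexSq (γ : ℂ) (Complex.I * a) (3 * ω) :=
    (toyIndexSq_injective hb).ne fun h => hω (by linear_combination -h / 2)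
  rw [harmonic_denom_eq h3 (sq_eq_sq_mul_toyIndexSq_of_dispersion h1 hdisp)]
  have hcoeff_ne : 9 * ω ^ 2 * ((γ : ℂ) - Complex.I * a * (3 * ω)) ≠ 0 := by simp [hω, h3]
  refine ⟨hne, mul_ne_zero hcoeff_ne (sub_ne_zero.mpr hne), ?_⟩
  rw [div_mul_cancel_left₀ hcoeff_ne, one_div]
end

section
/- Let a, b, c be real numbers, let k ∈ ℂ, and let ω ∈ ℂ with ω ≠ 0, a·ω² + i·b·ω + c ≠ 0 and 9a·ω² + 3i·b·ω + c ≠ 0. Define n²(z) = 1 + 1/(a·z² + i·b·z + c). If a·ω⁴ + i·b·ω³ + (c+1)·ω² = k²·(a·ω² + i·b·ω + c) and n²(ω) ≠ n²(3ω), then the denominator ω²·(81a·k² − 9c − 9) − 81a·ω⁴ + 27i·b·k²·ω − 27i·b·ω³ + 9c·k² is nonzero, and (81a·ω⁴ + 27i·b·ω³ + 9c·ω²) / (ω²·(81a·k² − 9c − 9) − 81a·ω⁴ + 27i·b·k²·ω − 27i·b·ω³ + 9c·k²) = 1/(n²(ω) − n²(3ω)). -/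
/-!
Write `D(z) = a z² + i b z + c`, so that `n²(z) = 1 + 1/D(z)`. The dispersion relation says
`(k² − ω²)·D(ω) = ω²`, the numerator of `c₁` is `9ω²·D(3ω)` and its denominator is
`9((k² − ω²)·D(3ω) − ω²)`. Multiplying the denominator by `D(ω)` and using the dispersion
relation turns it into `9ω²(D(3ω) − D(ω))`, so the quotient is
`D(ω)D(3ω)/(D(3ω) − D(ω)) = 1/(1/D(ω) − 1/D(3ω))`.
-/

variable {K : Type*} [Field K]

theorem denom_ne_zero_of_dispersion {p q r k ω : K} (hω : ω ≠ 0)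
    (hdisp : p * ω ^ 4 + q * ω ^ 3 + (r + 1) * ω ^ 2 = k ^ 2 * (p * ω ^ 2 + q * ω + r)) :
    p * ω ^ 2 + q * ω + r ≠ 0 := by
  intro hD
  apply pow_ne_zero 2 hω
  linear_combination hdisp - (ω ^ 2 - k ^ 2) * hD

theorem ne_zero_and_mul_div_eq_one_div_sub_one_div {x m d₁ d₃ : K} (hd₁ : d₁ ≠ 0)
    (hd₃ : d₃ ≠ 0) (hm : m ≠ 0) (hd : d₁ ≠ d₃) (h : x * d₁ = m * (d₃ - d₁)) :
    x ≠ 0 ∧ m * d₃ / x = 1 / (1 / d₁ - 1 / d₃) := by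
  have hx : x ≠ 0 := by
    rintro rfl
    simp [hm, sub_eq_zero, hd.symm] at h
  refine ⟨hx, ?_⟩
  simp only [one_div]
  rw [inv_sub_inv hd₁ hd₃, inv_div, div_eq_div_iff hx (sub_ne_zero.mpr hd.symm)]
  linear_combination -d₃ * h

theorem lorentz_c1_coefficient_general (a b c : ℝ) (k ω : ℂ) (hω : ω ≠ 0)
    (h3 : 9 * (a : ℂ) * ω ^ 2 + 3 * Complex.I * (b : ℂ) * ω + (c : ℂ) ≠ 0)
    (n2 : ℂ → ℂ)
    (hn2 : ∀ z : ℂ, n2 z = 1 + 1 / ((a : ℂ) * z ^ 2 + Complex.I * (b : ℂ) * z + (c : ℂ)))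
    (hdisp : (a : ℂ) * ω ^ 4 + Complex.I * (b : ℂ) * ω ^ 3 + ((c : ℂ) + 1) * ω ^ 2
        = k ^ 2 * ((a : ℂ) * ω ^ 2 + Complex.I * (b : ℂ) * ω + (c : ℂ)))
    (hne : n2 ω ≠ n2 (3 * ω)) :
    (ω ^ 2 * (81 * (a : ℂ) * k ^ 2 - 9 * (c : ℂ) - 9) - 81 * (a : ℂ) * ω ^ 4
        + 27 * Complex.I * (b : ℂ) * k ^ 2 * ω - 27 * Complex.I * (b : ℂ) * ω ^ 3
        + 9 * (c : ℂ) * k ^ 2) ≠ 0 ∧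
    (81 * (a : ℂ) * ω ^ 4 + 27 * Complex.I * (b : ℂ) * ω ^ 3 + 9 * (c : ℂ) * ω ^ 2)
        / (ω ^ 2 * (81 * (a : ℂ) * k ^ 2 - 9 * (c : ℂ) - 9) - 81 * (a : ℂ) * ω ^ 4
            + 27 * Complex.I * (b : ℂ) * k ^ 2 * ω - 27 * Complex.I * (b : ℂ) * ω ^ 3
            + 9 * (c : ℂ) * k ^ 2)
      = 1 / (n2 ω - n2 (3 * ω)) := by
  set D₁ := (a : ℂ) * ω ^ 2 + Complex.I * b * ω + c
  set D₃ := 9 * (a : ℂ) * ω ^ 2 + 3 * Complex.I * b * ω + c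
  have hD₁ : D₁ ≠ 0 := denom_ne_zero_of_dispersion hω hdisp
  have hn2_sub : n2 ω - n2 (3 * ω) = 1 / D₁ - 1 / D₃ := by
    rw [hn2, hn2, add_sub_add_left_eq_sub]
    ring
  have hD : D₁ ≠ D₃ := fun h ↦ hne (sub_eq_zero.mp (by rw [hn2_sub, h, sub_self]))
  rw [hn2_sub, show 81 * (a : ℂ) * ω ^ 4 + 27 * Complex.I * b * ω ^ 3 + 9 * c * ω ^ 2
    = 9 * ω ^ 2 * D₃ by ring]
  exact ne_zero_and_mul_div_eq_one_div_sub_one_div hD₁ h3 (by simp [hω]) hD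
    (by linear_combination (-9 * D₃) * hdisp)

/-- The third-harmonic coefficient `c₁` of the Sellmeier-transformed Lorentz equation
equals `1/(n²(ω) − n²(3ω))`, where `n²(z) = 1 + 1/(a·z² + i·b·z + c)`. -/
theorem lorentz_c1_coefficient (a b c : ℝ) (k ω : ℂ) (hω : ω ≠ 0)
    (h1 : (a : ℂ) * ω ^ 2 + Complex.I * (b : ℂ) * ω + (c : ℂ) ≠ 0)
    (h3 : 9 * (a : ℂ) * ω ^ 2 + 3 * Complex.I * (b : ℂ) * ω + (c : ℂ) ≠ 0)
    (n2 : ℂ → ℂ)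
    (hn2 : ∀ z : ℂ, n2 z = 1 + 1 / ((a : ℂ) * z ^ 2 + Complex.I * (b : ℂ) * z + (c : ℂ)))
    (hdisp : (a : ℂ) * ω ^ 4 + Complex.I * (b : ℂ) * ω ^ 3 + ((c : ℂ) + 1) * ω ^ 2
        = k ^ 2 * ((a : ℂ) * ω ^ 2 + Complex.I * (b : ℂ) * ω + (c : ℂ)))
    (hne : n2 ω ≠ n2 (3 * ω)) :
    (ω ^ 2 * (81 * (a : ℂ) * k ^ 2 - 9 * (c : ℂ) - 9) - 81 * (a : ℂ) * ω ^ 4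
        + 27 * Complex.I * (b : ℂ) * k ^ 2 * ω - 27 * Complex.I * (b : ℂ) * ω ^ 3
        + 9 * (c : ℂ) * k ^ 2) ≠ 0 ∧
    (81 * (a : ℂ) * ω ^ 4 + 27 * Complex.I * (b : ℂ) * ω ^ 3 + 9 * (c : ℂ) * ω ^ 2)
        / (ω ^ 2 * (81 * (a : ℂ) * k ^ 2 - 9 * (c : ℂ) - 9) - 81 * (a : ℂ) * ω ^ 4
            + 27 * Complex.I * (b : ℂ) * k ^ 2 * ω - 27 * Complex.I * (b : ℂ) * ω ^ 3
            + 9 * (c : ℂ) * k ^ 2)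
      = 1 / (n2 ω - n2 (3 * ω)) :=
  lorentz_c1_coefficient_general a b c k ω hω h3 n2 hn2 hdisp hne
end
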